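/- The following contour integrals of the exponential cubic weight satisfy: I_0(e^{−x³}) + I_1(e^{−x³}) = (Γ(1/3)/3)(1 − ω), I_0(x e^{−x³}) + I_1(x e^{−x³}) = (Γ(2/3)/3)(1 − ω²), and consequently the ratio [I_0(x e^{−x³}) + I_1(x e^{−x³})] / [I_0(e^{−x³}) + I_1(e^{−x³})] equals (Γ(2/3)/Γ(1/3)) e^{iπ/3}; that is, the first recurrence coefficient β_0^{(1)} of the monic orthogonal polynomials for e^{−x³} on Γ_0 ∪ Γ_1 equals (Γ(2/3)/Γ(1/3)) e^{iπ/3}. -/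

import Mathlib

/-- The primitive third root of unity `ω = exp(2πi/3)`. -/
noncomputable def ω : ℂ := Complex.exp (2 * Real.pi * Complex.I / 3)

/-- Integral over the ray `Γ₀ = [0,∞)`. -/
noncomputable def I0 (f : ℂ → ℂ) : ℂ := ∫ t in Set.Ioi (0 : ℝ), f t

/-- Integral over the ray `Γ₁ = ω·[0,∞)`, oriented towards the origin. -/
noncomputable def I1 (f : ℂ → ℂ) : ℂ := -ω * ∫ t in Set.Ioi (0 : ℝ), f (ω * t)

/-- Integral over the ray `Γ₂ = ω²·[0,∞)`, oriented towards the origin. -/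
noncomputable def I2 (f : ℂ → ℂ) : ℂ := -ω ^ 2 * ∫ t in Set.Ioi (0 : ℝ), f (ω ^ 2 * t)

/-- `Q n p x = (−1)ⁿ 3⁻ⁿ e^{x³} (d/dx)ⁿ (e^{−x³} p(x))`. -/
noncomputable def Q (n : ℕ) (p : Polynomial ℂ) : ℂ → ℂ := fun x =>
  (-1) ^ n / 3 ^ n * Complex.exp (x ^ 3) *
    iteratedDeriv n (fun z => Complex.exp (-z ^ 3) * p.eval z) x

/-!
On the ray `Γ₁` the substitution `x = ω t` leaves `x³` unchanged, so `x ↦ xᵏ e^{-x³}` picks up only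
the factor `ωᵏ` and the orientation contributes `-ω`; hence
`(I₀ + I₁)(xᵏ e^{-x³}) = (1 - ω^{k+1}) ∫₀^∞ tᵏ e^{-t³} dt = (1 - ω^{k+1}) Γ((k+1)/3) / 3`.
The ratio of the cases `k = 1` and `k = 0` is `(Γ(2/3)/Γ(1/3)) (1 + ω)`, and `1 + ω = -ω² = e^{iπ/3}`.
-/

open Complex MeasureTheory Set

lemma isPrimitiveRoot_ω : IsPrimitiveRoot ω 3 := by
  simpa [ω] using Complex.isPrimitiveRoot_exp 3 (by norm_num)

lemma ω_pow_three : ω ^ 3 = 1 := isPrimitiveRoot_ω.pow_eq_one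

lemma one_add_ω : 1 + ω = exp (Real.pi * I / 3) := by
  have hsum : 1 + ω + ω ^ 2 = 0 := by
    simpa [Finset.sum_range_succ] using isPrimitiveRoot_ω.geom_sum_eq_zero (by norm_num)
  have hω2 : -ω ^ 2 = exp (Real.pi * I / 3 + 2 * Real.pi * I) := by
    rw [ω, ← exp_nat_mul, neg_eq_neg_one_mul, ← exp_pi_mul_I, ← exp_add]
    congr 1
    push_cast
    ring
  rw [exp_periodic] at hω2
  linear_combination hsum + hω2

lemma integral_Ioi_pow_mul_exp_neg_pow (k p : ℕ) (hp : 0 < p) :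
    ∫ t in Ioi (0 : ℝ), t ^ k * Real.exp (-t ^ p) = Real.Gamma ((k + 1) / p) / p := by
  have h := _root_.integral_rpow_mul_exp_neg_rpow (p := p) (q := k) (by exact_mod_cast hp)
    (by linarith [k.cast_nonneg (α := ℝ)])
  simp only [Real.rpow_natCast] at h
  rw [h]
  ring

lemma I0_pow_mul_exp_neg_pow (k p : ℕ) (hp : 0 < p) :
    I0 (fun x => x ^ k * exp (-x ^ p)) = (Real.Gamma ((k + 1) / p) : ℂ) / p := by
  have hreal : ∀ t : ℝ, (t : ℂ) ^ k * exp (-(t : ℂ) ^ p) = ((t ^ k * Real.exp (-t ^ p) : ℝ) : ℂ) :=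
    fun t => by push_cast; ring
  rw [I0]
  simp_rw [hreal]
  rw [integral_complex_ofReal, integral_Ioi_pow_mul_exp_neg_pow k p hp]
  norm_cast

lemma I0_add_I1_of_map_ω_mul {f : ℂ → ℂ} {k : ℕ} (hf : ∀ z, f (ω * z) = ω ^ k * f z) :
    I0 f + I1 f = (1 - ω ^ (k + 1)) * I0 f := by
  simp only [I0, I1, hf, integral_const_mul]
  ring

lemma I0_add_I1_pow_mul_exp_neg_cube (k : ℕ) :
    I0 (fun x => x ^ k * exp (-x ^ 3)) + I1 (fun x => x ^ k * exp (-x ^ 3)) =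
      (Real.Gamma ((k + 1) / 3) : ℂ) / 3 * (1 - ω ^ (k + 1)) := by
  rw [I0_add_I1_of_map_ω_mul (k := k) (fun z => by simp only [mul_pow, ω_pow_three, one_mul]; ring),
    I0_pow_mul_exp_neg_pow k 3 (by norm_num)]
  push_cast
  ring

/-- `∫_{Γ₀∪Γ₁} e^{−x³} dx = (Γ(1/3)/3)(1−ω)`,
`∫_{Γ₀∪Γ₁} x e^{−x³} dx = (Γ(2/3)/3)(1−ω²)`, and hence the first recurrence
coefficient `β₀⁽¹⁾` equals `(Γ(2/3)/Γ(1/3)) e^{iπ/3}`. -/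
theorem stmt7 :
    I0 (fun x => Complex.exp (-x ^ 3)) + I1 (fun x => Complex.exp (-x ^ 3)) =
      ((Real.Gamma (1/3) : ℂ) / 3) * (1 - ω) ∧
    I0 (fun x => x * Complex.exp (-x ^ 3)) + I1 (fun x => x * Complex.exp (-x ^ 3)) =
      ((Real.Gamma (2/3) : ℂ) / 3) * (1 - ω ^ 2) ∧
    (I0 (fun x => x * Complex.exp (-x ^ 3)) + I1 (fun x => x * Complex.exp (-x ^ 3))) /
        (I0 (fun x => Complex.exp (-x ^ 3)) + I1 (fun x => Complex.exp (-x ^ 3))) =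
      ((Real.Gamma (2/3) / Real.Gamma (1/3) : ℝ) : ℂ) *
        Complex.exp ((Real.pi : ℂ) * Complex.I / 3) := by
  have h0 := I0_add_I1_pow_mul_exp_neg_cube 0
  have h1 := I0_add_I1_pow_mul_exp_neg_cube 1
  norm_num only [pow_zero, pow_one, one_mul, zero_add] at h0 h1
  refine ⟨h0, h1, ?_⟩
  have hΓ : (Real.Gamma (1/3) : ℂ) ≠ 0 := by exact_mod_cast (Real.Gamma_pos_of_pos (by norm_num)).ne'
  have hω : 1 - ω ≠ 0 := sub_ne_zero.mpr (isPrimitiveRoot_ω.ne_one (by norm_num)).symm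
  rw [h0, h1, ← one_add_ω, ofReal_div]
  field_simp
  ring
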